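/- Two finite pointed Π-labeled graphs satisfy the same full graded Π-type of modal depth n if and only if, for every counting message passing automaton (CMPA) over Π, the two pointed graphs are in identical states in every round ℓ ≤ n. -/
import Mathlib


/-- A finite directed node-labeled graph: finite node set `V`, out-neighbour
finsets `adj v`, and a labeling of nodes by sets of node label symbols from `α`. -/
structure LGraph (α : Type) : Type 1 where
  V : Type
  fintypeV : Fintype V
  adj : V → Finset V
  label : V → Set α

attribute [instance] LGraph.fintypeV

/-- Formulas of graded modal logic GML over node label symbols `α`:
`⊤`, labels, negation, conjunction, and graded diamonds `◇_{≥k}`. -/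
inductive GML (α : Type) : Type where
  | top : GML α
  | lab : α → GML α
  | neg : GML α → GML α
  | and : GML α → GML α → GML α
  | dia : ℕ → GML α → GML α

/-- Truth of a GML formula at a node of a labeled graph; `dia k φ` (`◇_{≥k}φ`)
holds iff at least `k` out-neighbours satisfy `φ`. -/
def GML.sat {α : Type} (G : LGraph α) : GML α → G.V → Prop
  | .top, _ => True
  | .lab p, v => p ∈ G.label v
  | .neg φ, v => ¬ GML.sat G φ v
  | .and φ ψ, v => GML.sat G φ v ∧ GML.sat G ψ v
  | .dia k φ, v => ∃ s : Finset G.V, s ⊆ G.adj v ∧ k ≤ s.card ∧ ∀ u ∈ s, GML.sat G φ u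

/-- `⊥` as a GML formula. -/
def GML.bot {α : Type} : GML α := .neg .top

/-- `□φ := ¬◇_{≥1}¬φ`. -/
def GML.box {α : Type} (φ : GML α) : GML α := .neg (.dia 1 (.neg φ))

/-- `◇_{=n}φ := ◇_{≥n}φ ∧ ¬◇_{≥n+1}φ`. -/
def GML.diaEq {α : Type} (n : ℕ) (φ : GML α) : GML α := .and (.dia n φ) (.neg (.dia (n + 1) φ))

/-- Schemata of GMSC over node label symbols `α` and head predicates (schema variables) `ν`. -/
inductive Schema (α ν : Type) : Type where
  | top : Schema α ν
  | lab : α → Schema α ν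
  | var : ν → Schema α ν
  | neg : Schema α ν → Schema α ν
  | and : Schema α ν → Schema α ν → Schema α ν
  | dia : ℕ → Schema α ν → Schema α ν

/-- Substituting a GML formula for each head predicate of a schema. -/
def Schema.subst {α ν : Type} (σ : ν → GML α) : Schema α ν → GML α
  | .top => .top
  | .lab p => .lab p
  | .var X => σ X
  | .neg φ => .neg (φ.subst σ)
  | .and φ ψ => .and (φ.subst σ) (ψ.subst σ)
  | .dia k φ => .dia k (φ.subst σ)

/-- A GMSC program over node label symbols `α` with head predicates `ν`:
terminal clauses `X(0) :− term X`, iteration clauses `X :− iter X`, and a set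
`app` of appointed predicates. -/
structure Program (α ν : Type) where
  term : ν → GML α
  iter : ν → Schema α ν
  app : Set ν

/-- The `n`-th iteration formula `Xⁿ` of a head predicate `X`: `X⁰` is the terminal body,
and `X^{n+1}` is the iteration body with each head predicate `Y` replaced by `Yⁿ`. -/
def Program.iterFormula {α ν : Type} (P : Program α ν) : ℕ → ν → GML α
  | 0 => P.term
  | n + 1 => fun X => (P.iter X).subst (P.iterFormula n)

/-- The program accepts `(G, w)` iff some appointed predicate's iteration formula is
true at `w` in some round. -/
def Program.accepts {α ν : Type} (P : Program α ν) (G : LGraph α) (w : G.V) : Prop :=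
  ∃ X ∈ P.app, ∃ n : ℕ, GML.sat G (P.iterFormula n X) w

/-- The modal depth of a GML formula: maximal nesting of graded diamonds. -/
def GML.mdepth {α : Type} : GML α → ℕ
  | .top => 0
  | .lab _ => 0
  | .neg φ => φ.mdepth
  | .and φ ψ => max φ.mdepth ψ.mdepth
  | .dia _ φ => φ.mdepth + 1

/-- Finite conjunction of a list of GML formulas. -/
def bigAnd {α : Type} : List (GML α) → GML α
  | [] => .top
  | φ :: l => .and φ (bigAnd l)

/-- The depth-0 part of a type as a GML formula: the conjunction over `p ∈ α` of `p` or `¬p`. -/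
noncomputable def baseFormula {α : Type} [Fintype α] [DecidableEq α] (t : α → Bool) : GML α :=
  bigAnd ((Finset.univ : Finset α).toList.map fun p =>
    if t p then GML.lab p else GML.neg (GML.lab p))

/-- Abstract data of a full graded `α`-type: at depth 0, which labels hold; at depth `n+1`,
the depth-0 data, a finitely supported function giving for each depth-`n` full type the exact
number of out-neighbours of that type, and the total number of out-neighbours. -/
def FullTD (α : Type) : ℕ → Type
  | 0 => α → Bool
  | n + 1 => (α → Bool) × (FullTD α n →₀ ℕ) × ℕ

/-- The GML formula of a full graded `α`-type of modal depth `n`: at depth `n+1`, the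
conjunction of the depth-0 type with the conjuncts `◇_{=ℓ}τ` for each depth-`n` full type `τ`
realized by exactly `ℓ ≥ 1` out-neighbours, together with `◇_{=m}⊤` where `m` is the total
number of out-neighbours. -/
noncomputable def FullTD.toFormula {α : Type} [Fintype α] [DecidableEq α] :
    ∀ {n : ℕ}, FullTD α n → GML α
  | 0, t => baseFormula t
  | n + 1, t =>
    GML.and (baseFormula t.1)
      (GML.and
        (bigAnd (t.2.1.support.toList.map fun τ =>
          GML.diaEq (t.2.1 τ) (FullTD.toFormula τ)))
        (GML.diaEq t.2.2 GML.top))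

/-- A counting message passing automaton (CMPA) over node label symbols `α` with state
set `Q`: an initialization function from label sets to states, a transition function taking
the current state and the multiset of out-neighbour states, and accepting states `F`. -/
structure CMPA (α Q : Type) where
  init : Set α → Q
  trans : Q → Multiset Q → Q
  F : Set Q

/-- The state of a node at each round: round 0 is given by the initialization function on
the node's labels, and round `n+1` applies the transition function to the node's round-`n`
state and the multiset of round-`n` states of its out-neighbours. -/
def CMPA.state {α Q : Type} (A : CMPA α Q) (G : LGraph α) : ℕ → G.V → Q
  | 0, v => A.init (G.label v)
  | n + 1, v => A.trans (A.state G n v) ((G.adj v).val.map (A.state G n))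

/-- The CMPA accepts `(G, w)` iff `w` visits an accepting state at some round. -/
def CMPA.accepts {α Q : Type} (A : CMPA α Q) (G : LGraph α) (w : G.V) : Prop :=
  ∃ n : ℕ, A.state G n w ∈ A.F

/-- The full graded `α`-type (as data) of modal depth `n` of a pointed graph. -/
noncomputable def fullTypeOf {α : Type} (G : LGraph α) : ∀ n : ℕ, G.V → FullTD α n
  | 0, v => fun p => @decide (p ∈ G.label v) (Classical.propDecidable _)
  | n + 1, v =>
    letI := Classical.decEq (FullTD α n)
    ((fun p => @decide (p ∈ G.label v) (Classical.propDecidable _)),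
      Multiset.toFinsupp ((G.adj v).val.map (fullTypeOf G n)),
      (G.adj v).card)


/-! ### Auxiliary development -/

/-- A default inhabitant of `FullTD α n`. -/
def tdDefault (α : Type) : ∀ n : ℕ, FullTD α n
  | 0 => fun _ => false
  | _ + 1 => (fun _ => false, 0, 0)

instance fullTD_countable {α : Type} [Fintype α] : ∀ n : ℕ, Countable (FullTD α n)
  | 0 => inferInstanceAs (Countable (α → Bool))
  | n + 1 =>
    haveI := fullTD_countable (α := α) n
    inferInstanceAs (Countable ((α → Bool) × (FullTD α n →₀ ℕ) × ℕ))

/-- The depth-0 part of a full type. -/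
def tdBase {α : Type} : ∀ {n : ℕ}, FullTD α n → (α → Bool)
  | 0, t => t
  | _ + 1, t => t.1

/-- Cast an element of the sigma type down to level `ℓ` (default if levels mismatch). -/
def tdCast {α : Type} (ℓ : ℕ) (s : Σ m, FullTD α m) : FullTD α ℓ :=
  if h : s.1 = ℓ then cast (congrArg (FullTD α) h) s.2 else tdDefault α ℓ

@[simp] lemma tdCast_mk {α : Type} (ℓ : ℕ) (τ : FullTD α ℓ) :
    tdCast ℓ ⟨ℓ, τ⟩ = τ := by
  simp [tdCast]

/-- Restriction of a full type of depth `n+1` to depth `n`. -/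
noncomputable def tdRestrict {α : Type} : ∀ {n : ℕ}, FullTD α (n + 1) → FullTD α n
  | 0, t => t.1
  | n + 1, t =>
    letI := Classical.decEq (FullTD α n)
    (t.1, Multiset.toFinsupp ((Finsupp.toMultiset t.2.1).map tdRestrict), t.2.2)

lemma tdRestrict_fullTypeOf {α : Type} :
    ∀ (n : ℕ) (G : LGraph α) (u : G.V),
      tdRestrict (fullTypeOf G (n + 1) u) = fullTypeOf G n u := by
  intro n
  induction n with
  | zero => intro G u; rfl
  | succ n ih =>
    intro G u
    letI := Classical.decEq (FullTD α n)
    letI := Classical.decEq (FullTD α (n + 1))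
    show (_, Multiset.toFinsupp
        ((Finsupp.toMultiset (Multiset.toFinsupp
          ((G.adj u).val.map (fullTypeOf G (n + 1))))).map tdRestrict), _)
      = fullTypeOf G (n + 1) u
    rw [Multiset.toFinsupp_toMultiset, Multiset.map_map]
    show (_, Multiset.toFinsupp ((G.adj u).val.map (fun x => tdRestrict (fullTypeOf G (n+1) x))), _) = _
    have : (fun x => tdRestrict (fullTypeOf G (n+1) x)) = fullTypeOf G n := by
      funext x; exact ih G x
    rw [this]
    rfl

lemma fullTypeOf_mono {α : Type} :
    ∀ (n : ℕ) {G H : LGraph α} {w : G.V} {v : H.V},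
      fullTypeOf G n w = fullTypeOf H n v →
      ∀ ℓ : ℕ, ℓ ≤ n → fullTypeOf G ℓ w = fullTypeOf H ℓ v := by
  intro n
  induction n with
  | zero =>
    intro G H w v h ℓ hℓ
    interval_cases ℓ; exact h
  | succ n ih =>
    intro G H w v h ℓ hℓ
    rcases Nat.lt_or_ge ℓ (n + 1) with h' | h'
    · have h2 : fullTypeOf G n w = fullTypeOf H n v := by
        rw [← tdRestrict_fullTypeOf n G w, ← tdRestrict_fullTypeOf n H v, h]
      exact ih h2 ℓ (Nat.lt_succ_iff.mp h')
    · have : ℓ = n + 1 := le_antisymm hℓ h'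
      subst this; exact h

lemma tdBase_fullTypeOf {α : Type} (n : ℕ) (G : LGraph α) (u : G.V) :
    tdBase (fullTypeOf G n u) = fun p => @decide (p ∈ G.label u) (Classical.propDecidable _) := by
  cases n <;> rfl

/-- States of a CMPA are determined by the full type of the same depth. -/
lemma state_eq_of_type_eq {α Q : Type} [Fintype α] (A : CMPA α Q) :
    ∀ (ℓ : ℕ) {G H : LGraph α} {w : G.V} {v : H.V},
      fullTypeOf G ℓ w = fullTypeOf H ℓ v → A.state G ℓ w = A.state H ℓ v := by
  intro ℓ
  induction ℓ with
  | zero =>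
    intro G H w v h
    have hlab : G.label w = H.label v := by
      ext p
      have hd : @decide (p ∈ G.label w) (Classical.propDecidable _) =
          @decide (p ∈ H.label v) (Classical.propDecidable _) := congrFun h p
      constructor <;> intro hp
      · exact @of_decide_eq_true _ (Classical.propDecidable _)
          (hd ▸ @decide_eq_true _ (Classical.propDecidable _) hp)
      · exact @of_decide_eq_true _ (Classical.propDecidable _)
          (hd ▸ @decide_eq_true _ (Classical.propDecidable _) hp)
    show A.init (G.label w) = A.init (H.label v)
    rw [hlab]
  | succ ℓ ih =>
    intro G H w v h
    classical
    letI := Classical.decEq (FullTD α ℓ)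
    -- a canonical state for each full type
    let f : FullTD α ℓ → Q := fun τ =>
      if h : ∃ p : Σ' (G : LGraph α), G.V, fullTypeOf p.1 ℓ p.2 = τ then
        A.state h.choose.1 ℓ h.choose.2
      else A.init ∅
    have key : ∀ (K : LGraph α) (u : K.V), A.state K ℓ u = f (fullTypeOf K ℓ u) := by
      intro K u
      have hex : ∃ p : Σ' (G : LGraph α), G.V, fullTypeOf p.1 ℓ p.2 = fullTypeOf K ℓ u :=
        ⟨⟨K, u⟩, rfl⟩
      show A.state K ℓ u = _
      simp only [f, dif_pos hex]
      exact (ih hex.choose_spec).symm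
    -- components of the type equality
    have hfin : Multiset.toFinsupp ((G.adj w).val.map (fullTypeOf G ℓ)) =
        Multiset.toFinsupp ((H.adj v).val.map (fullTypeOf H ℓ)) :=
      congrArg (fun t : FullTD α (ℓ + 1) => t.2.1) h
    have hms : (G.adj w).val.map (fullTypeOf G ℓ) = (H.adj v).val.map (fullTypeOf H ℓ) := by
      have := congrArg Finsupp.toMultiset hfin
      rwa [Multiset.toFinsupp_toMultiset, Multiset.toFinsupp_toMultiset] at this
    have hrest : fullTypeOf G ℓ w = fullTypeOf H ℓ v := by
      rw [← tdRestrict_fullTypeOf ℓ G w, ← tdRestrict_fullTypeOf ℓ H v, h]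
    show A.trans (A.state G ℓ w) ((G.adj w).val.map (A.state G ℓ)) =
      A.trans (A.state H ℓ v) ((H.adj v).val.map (A.state H ℓ))
    have hm1 : (G.adj w).val.map (A.state G ℓ) =
        ((G.adj w).val.map (fullTypeOf G ℓ)).map f := by
      rw [Multiset.map_map]
      exact Multiset.map_congr rfl (fun x _ => key G x)
    have hm2 : (H.adj v).val.map (A.state H ℓ) =
        ((H.adj v).val.map (fullTypeOf H ℓ)).map f := by
      rw [Multiset.map_map]
      exact Multiset.map_congr rfl (fun x _ => key H x)
    rw [hm1, hm2, hms, ih hrest]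

/-- The universal CMPA whose state at round `ℓ` is the depth-`ℓ` full type. -/
noncomputable def univCMPA (α : Type) [Fintype α] : CMPA α (Σ m, FullTD α m) where
  init L := ⟨0, fun p => @decide (p ∈ L) (Classical.propDecidable _)⟩
  trans s M :=
    ⟨s.1 + 1,
      letI := Classical.decEq (FullTD α s.1)
      (tdBase s.2, Multiset.toFinsupp (M.map (tdCast s.1)), Multiset.card M)⟩
  F := ∅

lemma univCMPA_state {α : Type} [Fintype α] :
    ∀ (ℓ : ℕ) (G : LGraph α) (u : G.V),
      (univCMPA α).state G ℓ u = ⟨ℓ, fullTypeOf G ℓ u⟩ := by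
  intro ℓ
  induction ℓ with
  | zero => intro G u; rfl
  | succ ℓ ih =>
    intro G u
    letI := Classical.decEq (FullTD α ℓ)
    show (univCMPA α).trans ((univCMPA α).state G ℓ u)
        ((G.adj u).val.map ((univCMPA α).state G ℓ)) = _
    have hmap : (G.adj u).val.map ((univCMPA α).state G ℓ) =
        (G.adj u).val.map (fun x => (⟨ℓ, fullTypeOf G ℓ x⟩ : Σ m, FullTD α m)) :=
      Multiset.map_congr rfl (fun x _ => ih G x)
    rw [ih G u, hmap]
    show (⟨ℓ + 1,
      (tdBase (fullTypeOf G ℓ u),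
        Multiset.toFinsupp (((G.adj u).val.map
          (fun x => (⟨ℓ, fullTypeOf G ℓ x⟩ : Σ m, FullTD α m))).map (tdCast ℓ)),
        Multiset.card ((G.adj u).val.map
          (fun x => (⟨ℓ, fullTypeOf G ℓ x⟩ : Σ m, FullTD α m))))⟩ : Σ m, FullTD α m) = _
    rw [Multiset.map_map]
    have h1 : (tdCast ℓ ∘ fun x => (⟨ℓ, fullTypeOf G ℓ x⟩ : Σ m, FullTD α m)) =
        fullTypeOf G ℓ := by funext x; exact tdCast_mk ℓ _
    rw [Multiset.card_map, tdBase_fullTypeOf]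
    show (⟨ℓ + 1, (_, Multiset.toFinsupp ((G.adj u).val.map _), _)⟩ : Σ m, FullTD α m) = _
    rw [h1]
    rfl

/-- Two finite pointed `α`-labeled graphs have the same full graded
`α`-type of modal depth `n` if and only if, for every counting message passing automaton
over `α` (with an at most countable state set), the two pointed graphs are in identical
states in every round `ℓ ≤ n`. -/
theorem full_type_iff_same_cmpa_states {α : Type} [Fintype α]
    (G H : LGraph α) (w : G.V) (v : H.V) (n : ℕ) :
    fullTypeOf G n w = fullTypeOf H n v ↔
      ∀ (Q : Type) (_ : Countable Q) (A : CMPA α Q),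
        ∀ ℓ : ℕ, ℓ ≤ n → A.state G ℓ w = A.state H ℓ v := by
  constructor
  · intro h Q _ A ℓ hℓ
    exact state_eq_of_type_eq A ℓ (fullTypeOf_mono n h ℓ hℓ)
  · intro h
    have := h (Σ m, FullTD α m) inferInstance (univCMPA α) n le_rfl
    rw [univCMPA_state n G w, univCMPA_state n H v] at this
    simpa using this
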